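/- Let A ∈ Matrix (Fin n) (Fin n) ℝ be symmetric (Aᵀ = A) and let P be a Moore–Penrose pseudoinverse of A. Let v ∈ Fin n → ℝ, set x = P.mulVec v, y = (1 - A * P).mulVec v, and β = 1 + vᵀ (P.mulVec v), and suppose y ≠ 0. Then the matrix B = P - (1/‖y‖²) • (Matrix.vecMulVec x y + Matrix.vecMulVec y x) + (β/‖y‖⁴) • Matrix.vecMulVec y y is a Moore–Penrose pseudoinverse of the rank-one update A + Matrix.vecMulVec v v, where ‖y‖² = yᵀ y. -/

import Mathlib

/-!
Since `A` is symmetric, `A * P` is the orthogonal projector onto the range of `A`, and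
`y = (1 - A * P) v` is the component of `v` orthogonal to that range, so `A y = P y = 0`,
`yᵀ v = yᵀ y` and `yᵀ P v = 0`. For `M = A + v vᵀ` and the candidate `B`, a direct expansion
gives `M B = A P + y yᵀ / ‖y‖²`, the orthogonal projector `R` onto `range A ⊕ ℝ y`.
As `M` and `B` are symmetric, `B M = (M B)ᵀ = R` too, and the Penrose equations reduce to
`R M = M` and `R B = B`.
-/

open Matrix

/-- `P` is a Moore–Penrose pseudoinverse of `A`. -/
def IsMoorePenrose {n : ℕ} (A P : Matrix (Fin n) (Fin n) ℝ) : Prop :=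
  A * P * A = A ∧ P * A * P = P ∧ (A * P)ᵀ = A * P ∧ (P * A)ᵀ = P * A

variable {n : ℕ}

namespace IsMoorePenrose

variable {A P Q : Matrix (Fin n) (Fin n) ℝ}

theorem transpose (hP : IsMoorePenrose A P) : IsMoorePenrose Aᵀ Pᵀ := by
  obtain ⟨h₁, h₂, h₃, h₄⟩ := hP
  refine ⟨?_, ?_, ?_, ?_⟩
  · rw [← transpose_mul, ← transpose_mul, ← Matrix.mul_assoc, h₁]
  · rw [← transpose_mul, ← transpose_mul, ← Matrix.mul_assoc, h₂]
  · rw [← transpose_mul, h₄, h₄]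
  · rw [← transpose_mul, h₃, h₃]

theorem unique (hP : IsMoorePenrose A P) (hQ : IsMoorePenrose A Q) : P = Q := by
  obtain ⟨hP₁, hP₂, hP₃, hP₄⟩ := hP
  obtain ⟨hQ₁, hQ₂, hQ₃, hQ₄⟩ := hQ
  have hAP : A * P = A * Q := by
    calc A * P = (A * Q * A * P)ᵀ := by rw [hQ₁, hP₃]
      _ = (A * P)ᵀ * (A * Q)ᵀ := by rw [← transpose_mul]; noncomm_ring
      _ = A * Q := by rw [hP₃, hQ₃, ← Matrix.mul_assoc, hP₁]
  have hPA : P * A = Q * A := by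
    calc P * A = (P * A * Q * A)ᵀ := by rw [Matrix.mul_assoc P, Matrix.mul_assoc P, hQ₁, hP₄]
      _ = (Q * A)ᵀ * (P * A)ᵀ := by rw [← transpose_mul]; noncomm_ring
      _ = Q * A := by rw [hP₄, hQ₄, Matrix.mul_assoc, ← Matrix.mul_assoc A, hP₁]
  calc P = P * A * P := hP₂.symm
    _ = Q * A * Q := by rw [hPA, Matrix.mul_assoc, hAP, ← Matrix.mul_assoc]
    _ = Q := hQ₂

theorem transpose_eq_of_symm (hA : Aᵀ = A) (hP : IsMoorePenrose A P) : Pᵀ = P :=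
  (hA ▸ hP.transpose).unique hP

theorem mul_comm_of_symm (hA : Aᵀ = A) (hP : IsMoorePenrose A P) : A * P = P * A := by
  rw [← hP.2.2.1, transpose_mul, hP.transpose_eq_of_symm hA, hA]

end IsMoorePenrose

theorem isMoorePenrose_of_mul_eq_projector {A P R : Matrix (Fin n) (Fin n) ℝ} (hA : Aᵀ = A)
    (hP : Pᵀ = P) (hAP : A * P = R) (hR : Rᵀ = R) (hRA : R * A = A) (hRP : R * P = P) :
    IsMoorePenrose A P := by
  have hPA : P * A = R := by rw [← hA, ← hP, ← transpose_mul, hAP, hR]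
  exact ⟨by rw [hAP, hRA], by rw [hPA, hRP], by rw [hAP, hR], by rw [hPA, hR]⟩

theorem Matrix.vecMul_eq_mulVec_of_transpose_eq {m α : Type*} [Fintype m] [CommSemiring α]
    {A : Matrix m m α} (hA : Aᵀ = A) (x : m → α) : x ᵥ* A = A *ᵥ x := by
  rw [← mulVec_transpose, hA]

section RankOneUpdate

variable {A P : Matrix (Fin n) (Fin n) ℝ} {v y : Fin n → ℝ}

theorem mulVec_residual_eq_zero (hA : Aᵀ = A) (hP : IsMoorePenrose A P)
    (hy : y = (1 - A * P) *ᵥ v) : A *ᵥ y = 0 := by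
  rw [hy, mulVec_mulVec, Matrix.mul_sub, Matrix.mul_one, hP.mul_comm_of_symm hA,
    ← Matrix.mul_assoc, hP.1, sub_self, zero_mulVec]

theorem pinv_mulVec_residual_eq_zero (hP : IsMoorePenrose A P) (hy : y = (1 - A * P) *ᵥ v) :
    P *ᵥ y = 0 := by
  rw [hy, mulVec_mulVec, Matrix.mul_sub, Matrix.mul_one, ← Matrix.mul_assoc, hP.2.1, sub_self,
    zero_mulVec]

theorem mulVec_pinv_mulVec_eq_sub_residual (hy : y = (1 - A * P) *ᵥ v) :
    A *ᵥ (P *ᵥ v) = v - y := by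
  rw [hy, sub_mulVec, one_mulVec, mulVec_mulVec, sub_sub_cancel]

theorem residual_dotProduct_pinv_mulVec (hA : Aᵀ = A) (hP : IsMoorePenrose A P)
    (hy : y = (1 - A * P) *ᵥ v) : y ⬝ᵥ P *ᵥ v = 0 := by
  rw [dotProduct_mulVec, ← mulVec_transpose, hP.transpose_eq_of_symm hA,
    pinv_mulVec_residual_eq_zero hP hy, zero_dotProduct]

theorem residual_dotProduct_eq_dotProduct_self (hA : Aᵀ = A) (hP : IsMoorePenrose A P)
    (hy : y = (1 - A * P) *ᵥ v) : y ⬝ᵥ v = y ⬝ᵥ y := by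
  have hv : v = y + A *ᵥ (P *ᵥ v) := by
    rw [mulVec_pinv_mulVec_eq_sub_residual hy, add_sub_cancel]
  conv_lhs => rw [hv]
  rw [dotProduct_add, dotProduct_mulVec, ← mulVec_transpose, hA,
    mulVec_residual_eq_zero hA hP hy, zero_dotProduct, add_zero]

noncomputable def pinvRankOneUpdate (P : Matrix (Fin n) (Fin n) ℝ) (v y : Fin n → ℝ) :
    Matrix (Fin n) (Fin n) ℝ :=
  P - (1 / (y ⬝ᵥ y)) • (vecMulVec (P *ᵥ v) y + vecMulVec y (P *ᵥ v))
    + ((1 + v ⬝ᵥ P *ᵥ v) / (y ⬝ᵥ y) ^ 2) • vecMulVec y y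

theorem transpose_pinvRankOneUpdate (hP : Pᵀ = P) :
    (pinvRankOneUpdate P v y)ᵀ = pinvRankOneUpdate P v y := by
  simp only [pinvRankOneUpdate, transpose_add, transpose_sub, transpose_smul,
    transpose_vecMulVec, hP, add_comm (vecMulVec y _)]

theorem rankOneUpdate_mul_pinvRankOneUpdate (hA : Aᵀ = A) (hP : IsMoorePenrose A P)
    (hy : y = (1 - A * P) *ᵥ v) (hy0 : y ≠ 0) :
    (A + vecMulVec v v) * pinvRankOneUpdate P v y =
      A * P + (1 / (y ⬝ᵥ y)) • vecMulVec y y := by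
  have hs : y ⬝ᵥ y ≠ 0 := dotProduct_self_eq_zero.not.mpr hy0
  have hvy : v ⬝ᵥ y = y ⬝ᵥ y := by
    rw [dotProduct_comm, residual_dotProduct_eq_dotProduct_self hA hP hy]
  simp only [pinvRankOneUpdate, Matrix.add_mul, Matrix.mul_add, Matrix.mul_sub, Matrix.mul_smul]
  simp only [mul_vecMulVec, vecMulVec_mul, vecMulVec_mulVec, op_smul_eq_smul,
    vecMul_eq_mulVec_of_transpose_eq (hP.transpose_eq_of_symm hA),
    mulVec_pinv_mulVec_eq_sub_residual hy, mulVec_residual_eq_zero hA hP hy, hvy, sub_vecMulVec,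
    zero_vecMulVec, smul_vecMulVec]
  match_scalars <;> field_simp <;> ring

theorem projector_mul_rankOneUpdate (hA : Aᵀ = A) (hP : IsMoorePenrose A P)
    (hy : y = (1 - A * P) *ᵥ v) (hy0 : y ≠ 0) :
    (A * P + (1 / (y ⬝ᵥ y)) • vecMulVec y y) * (A + vecMulVec v v) = A + vecMulVec v v := by
  have hs : y ⬝ᵥ y ≠ 0 := dotProduct_self_eq_zero.not.mpr hy0
  have hAPv : (A * P) *ᵥ v = v - y := by
    rw [← mulVec_mulVec, mulVec_pinv_mulVec_eq_sub_residual hy]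
  simp only [Matrix.add_mul, Matrix.mul_add, Matrix.smul_mul, hP.1]
  simp only [mul_vecMulVec, vecMulVec_mul, vecMulVec_mulVec, op_smul_eq_smul,
    vecMul_eq_mulVec_of_transpose_eq hA, hAPv, mulVec_residual_eq_zero hA hP hy,
    residual_dotProduct_eq_dotProduct_self hA hP hy, sub_vecMulVec, smul_vecMulVec,
    vecMulVec_zero, smul_zero]
  match_scalars <;> field_simp
  ring

theorem projector_mul_pinvRankOneUpdate (hA : Aᵀ = A) (hP : IsMoorePenrose A P)
    (hy : y = (1 - A * P) *ᵥ v) (hy0 : y ≠ 0) :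
    (A * P + (1 / (y ⬝ᵥ y)) • vecMulVec y y) * pinvRankOneUpdate P v y =
      pinvRankOneUpdate P v y := by
  have hs : y ⬝ᵥ y ≠ 0 := dotProduct_self_eq_zero.not.mpr hy0
  have hPt := hP.transpose_eq_of_symm hA
  have hAPP : A * P * P = P := by rw [hP.mul_comm_of_symm hA, hP.2.1]
  have hAPx : (A * P) *ᵥ (P *ᵥ v) = P *ᵥ v := by rw [mulVec_mulVec, hAPP]
  have hAPy : (A * P) *ᵥ y = 0 := by
    rw [← mulVec_mulVec, pinv_mulVec_residual_eq_zero hP hy, mulVec_zero]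
  simp only [pinvRankOneUpdate, Matrix.add_mul, Matrix.mul_add, Matrix.mul_sub, Matrix.mul_smul,
    Matrix.smul_mul, hAPP]
  simp only [mul_vecMulVec, vecMulVec_mul, vecMulVec_mulVec, op_smul_eq_smul,
    vecMul_eq_mulVec_of_transpose_eq hPt, hAPx, hAPy, pinv_mulVec_residual_eq_zero hP hy,
    residual_dotProduct_pinv_mulVec hA hP hy, vecMulVec_zero, zero_vecMulVec, smul_vecMulVec,
    smul_zero]
  match_scalars <;> field_simp
  ring

end RankOneUpdate

/-- Rank-one pseudoinverse update (case `y ≠ 0`): if `A` is symmetric with pseudoinverse `P`,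
`x = P v`, `y = (1 - A*P) v ≠ 0` and `β = 1 + vᵀ (P v)`, then
`P - (1/‖y‖²) • (x yᵀ + y xᵀ) + (β/‖y‖⁴) • y yᵀ` is a Moore–Penrose pseudoinverse of
`A + v vᵀ`, where `‖y‖² = yᵀ y`. -/
theorem pinv_rank_one_update_not_in_range {n : ℕ} (A P : Matrix (Fin n) (Fin n) ℝ)
    (hA : Aᵀ = A) (hP : IsMoorePenrose A P) (v x y : Fin n → ℝ)
    (hx : x = P.mulVec v)
    (hy : y = (1 - A * P).mulVec v)
    (hy0 : y ≠ 0) :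
    IsMoorePenrose (A + Matrix.vecMulVec v v)
      (P - (1 / (y ⬝ᵥ y)) • (Matrix.vecMulVec x y + Matrix.vecMulVec y x)
         + ((1 + v ⬝ᵥ P.mulVec v) / (y ⬝ᵥ y) ^ 2) • Matrix.vecMulVec y y) := by
  subst hx
  exact isMoorePenrose_of_mul_eq_projector
    (by rw [transpose_add, hA, transpose_vecMulVec])
    (transpose_pinvRankOneUpdate (hP.transpose_eq_of_symm hA))
    (rankOneUpdate_mul_pinvRankOneUpdate hA hP hy hy0)
    (by rw [transpose_add, transpose_smul, transpose_vecMulVec, hP.2.2.1])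
    (projector_mul_rankOneUpdate hA hP hy hy0)
    (projector_mul_pinvRankOneUpdate hA hP hy hy0)
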